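/- arXiv:1201.0683 — 4 statements merged into one kernel-verified Lean document; each statement's English description precedes it below -/
import Mathlib

section
/- Let g be a nondegenerate symmetric bilinear form of Lorentzian signature (n,1) on a real vector space V, let ξ ∈ V be a null vector for g, let θ = g(ξ,·) be the associated covector, and let μ ∈ ℝ. Then the symmetric bilinear form g̃ = g + μ·θ⊗θ also has Lorentzian signature (n,1). Moreover ξ is null for g̃. -/
/-- If `g` has Lorentzian signature `(n,1)` and `ξ` is a nonzero
`g`-null vector with associated covector `θ = g(ξ,·)`, then for every `μ ∈ ℝ`
the bilinear form `g̃ = g + μ·θ⊗θ` again has Lorentzian signature `(n,1)`,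
and `ξ` is null for `g̃`. -/
theorem lorentzian_perturbation_by_null_covector
    {V : Type*} [AddCommGroup V] [Module ℝ V] (n : ℕ) (hn : 0 < n)
    (g : V →ₗ[ℝ] V →ₗ[ℝ] ℝ) (e : V ≃ₗ[ℝ] (Fin (n+1) → ℝ))
    (hg : ∀ u v : V, g u v =
      (∑ i : Fin n, e u i.castSucc * e v i.castSucc)
        - e u (Fin.last n) * e v (Fin.last n))
    (ξ : V) (hξ : ξ ≠ 0) (hnull : g ξ ξ = 0) (μ : ℝ) :
    (∃ e' : V ≃ₗ[ℝ] (Fin (n+1) → ℝ), ∀ u v : V,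
      g u v + μ * (g ξ u) * (g ξ v) =
        (∑ i : Fin n, e' u i.castSucc * e' v i.castSucc)
          - e' u (Fin.last n) * e' v (Fin.last n))
    ∧ g ξ ξ + μ * (g ξ ξ) * (g ξ ξ) = 0 := by
  have hsym : ∀ u v : V, g u v = g v u := by
    intro u v; rw [hg, hg]
    simp [mul_comm]
  -- the shear map T v = v + (μ/2) g ξ v • ξ
  set S : V →ₗ[ℝ] V := LinearMap.smulRight (g ξ) ((μ/2) • ξ) with hS
  have hSval : ∀ v, S v = (μ/2 * g ξ v) • ξ := by
    intro v
    simp [hS, LinearMap.smulRight_apply, smul_smul, mul_comm]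
  have hTinv : ∀ v, (LinearMap.id + S).comp (LinearMap.id - S) v = v := by
    intro v
    simp only [LinearMap.comp_apply, LinearMap.add_apply, LinearMap.sub_apply,
      LinearMap.id_apply, hSval, map_sub, map_smul, hnull]
    module
  have hTinv' : ∀ v, (LinearMap.id - S).comp (LinearMap.id + S) v = v := by
    intro v
    simp only [LinearMap.comp_apply, LinearMap.add_apply, LinearMap.sub_apply,
      LinearMap.id_apply, hSval, map_add, map_smul, hnull]
    module
  set T : V ≃ₗ[ℝ] V := LinearEquiv.ofLinear (LinearMap.id + S) (LinearMap.id - S)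
    (by ext v; simpa using hTinv v) (by ext v; simpa using hTinv' v) with hT
  have hTval : ∀ v, T v = v + (μ/2 * g ξ v) • ξ := by
    intro v
    simp [hT, LinearEquiv.ofLinear_apply, hSval]
  have key : ∀ u v : V, g (T u) (T v) = g u v + μ * (g ξ u) * (g ξ v) := by
    intro u v
    rw [hTval, hTval]
    simp only [map_add, map_smul, LinearMap.add_apply, LinearMap.smul_apply,
      smul_eq_mul]
    rw [hsym u ξ, hnull]
    ring
  refine ⟨⟨T ≪≫ₗ e, fun u v => ?_⟩, by rw [hnull]; ring⟩
  have := hg (T u) (T v)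
  rw [key] at this
  simpa using this
end

section
/- Let G be a nondegenerate symmetric bilinear form of signature (p,2) with p ≥ 2 on a real vector space W, and let Z₀ be a nonzero G-skew-symmetric endomorphism of W (i.e., G(Z₀u,v) = −G(u,Z₀v)) with Z₀² = 0. Then there exist vectors P₀, Q₀ ∈ W \ {0} with G(P₀,P₀) = G(Q₀,Q₀) = G(P₀,Q₀) = 0 such that Z₀ = P₀ ∧ Q₀, i.e., Z₀(w) = G(P₀,w)Q₀ − G(Q₀,w)P₀ for all w ∈ W. -/
/-- Every special null vector `Z₀` of `o(p,2)` (a nonzero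
`G`-skew-symmetric endomorphism squaring to zero, `G` of signature `(p,2)`,
`p ≥ 2`) is of the form `Z₀ = P₀ ∧ Q₀` for a pair of vectors spanning a
totally null plane. -/
theorem special_null_vector_is_decomposable
    {W : Type*} [AddCommGroup W] [Module ℝ W] (p : ℕ) (hp : 2 ≤ p)
    (G : W →ₗ[ℝ] W →ₗ[ℝ] ℝ) (e : W ≃ₗ[ℝ] (Fin (p+2) → ℝ))
    (hG : ∀ u v : W, G u v =
      (∑ i : Fin p, e u (Fin.castAdd 2 i) * e v (Fin.castAdd 2 i))
        - e u ⟨p, by omega⟩ * e v ⟨p, by omega⟩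
        - e u ⟨p+1, by omega⟩ * e v ⟨p+1, by omega⟩)
    (Z₀ : W →ₗ[ℝ] W)
    (hskew : ∀ u v : W, G (Z₀ u) v + G u (Z₀ v) = 0)
    (hZ2 : ∀ w : W, Z₀ (Z₀ w) = 0)
    (hZ0 : Z₀ ≠ 0) :
    ∃ P₀ Q₀ : W, P₀ ≠ 0 ∧ Q₀ ≠ 0 ∧
      G P₀ P₀ = 0 ∧ G Q₀ Q₀ = 0 ∧ G P₀ Q₀ = 0 ∧
      ∀ w : W, Z₀ w = G P₀ w • Q₀ - G Q₀ w • P₀ := by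
  classical
  -- G is symmetric
  have Gsymm : ∀ u v : W, G u v = G v u := by
    intro u v
    have hs : (∑ i : Fin p, e u (Fin.castAdd 2 i) * e v (Fin.castAdd 2 i))
        = ∑ i : Fin p, e v (Fin.castAdd 2 i) * e u (Fin.castAdd 2 i) :=
      Finset.sum_congr rfl fun i _ => mul_comm _ _
    rw [hG u v, hG v u, hs]; ring
  -- G is nondegenerate
  have nondeg : ∀ v : W, (∀ u : W, G u v = 0) → v = 0 := by
    intro v hv
    have hcoord : ∀ j : Fin (p+2), e v j = 0 := by
      intro j
      have h := hv (e.symm (Pi.single j 1))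
      rw [hG] at h
      simp only [LinearEquiv.apply_symm_apply] at h
      rcases lt_or_ge j.val p with hj | hj
      · have h1 : (Pi.single j 1 : Fin (p+2) → ℝ) ⟨p, by omega⟩ = 0 :=
          Pi.single_eq_of_ne (by intro hc; have := congrArg Fin.val hc; simp at this; omega) _
        have h2 : (Pi.single j 1 : Fin (p+2) → ℝ) ⟨p+1, by omega⟩ = 0 :=
          Pi.single_eq_of_ne (by intro hc; have := congrArg Fin.val hc; simp at this; omega) _
        rw [h1, h2, Finset.sum_eq_single ⟨j.val, hj⟩ ?_ ?_] at h
        · have hje : Fin.castAdd 2 ⟨j.val, hj⟩ = j := by ext; rfl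
          rw [hje, Pi.single_eq_same] at h
          linarith
        · intro i _ hi
          have : Fin.castAdd 2 i ≠ j := by
            intro hc; apply hi; ext
            have := congrArg Fin.val hc; simpa using this
          rw [Pi.single_eq_of_ne this]; ring
        · simp
      · have hjcases : j = ⟨p, by omega⟩ ∨ j = ⟨p+1, by omega⟩ := by
          have := j.isLt
          rcases Nat.lt_or_ge j.val (p+1) with h' | h'
          · left; ext; simp; omega
          · right; ext; simp; omega
        have hsum : (∑ i : Fin p,
            (Pi.single j 1 : Fin (p+2) → ℝ) (Fin.castAdd 2 i) * e v (Fin.castAdd 2 i)) = 0 := by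
          apply Finset.sum_eq_zero
          intro i _
          have : Fin.castAdd 2 i ≠ j := by
            intro hc; have := congrArg Fin.val hc; simp at this; omega
          rw [Pi.single_eq_of_ne this]; ring
        rw [hsum] at h
        rcases hjcases with hj' | hj'
        · rw [hj'] at h ⊢
          have h2 : (Pi.single ⟨p, by omega⟩ 1 : Fin (p+2) → ℝ) ⟨p+1, by omega⟩ = 0 :=
            Pi.single_eq_of_ne (by intro hc; have := congrArg Fin.val hc; simp at this) _
          rw [h2, Pi.single_eq_same] at h; linarith
        · rw [hj'] at h ⊢
          have h2 : (Pi.single ⟨p+1, by omega⟩ 1 : Fin (p+2) → ℝ) ⟨p, by omega⟩ = 0 :=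
            Pi.single_eq_of_ne (by intro hc; have := congrArg Fin.val hc; simp at this) _
          rw [h2, Pi.single_eq_same] at h; linarith
    have : e v = 0 := funext hcoord
    simpa using congrArg e.symm this
  -- the image of Z₀ is totally isotropic
  have him : ∀ u v : W, G (Z₀ u) (Z₀ v) = 0 := by
    intro u v
    have h := hskew (Z₀ u) v
    rw [hZ2] at h
    simpa using h
  -- ω(u,v) := G (Z₀ u) v is antisymmetric
  have hω : ∀ u v : W, G (Z₀ u) v = - G (Z₀ v) u := by
    intro u v
    have h1 := hskew u v
    have h2 := Gsymm u (Z₀ v)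
    linarith
  have hωd : ∀ u : W, G (Z₀ u) u = 0 := by
    intro u; have := hω u u; linarith
  -- find a, b with ω(a,b) = 1
  obtain ⟨a, b0, hab0⟩ : ∃ a b : W, G (Z₀ a) b ≠ 0 := by
    by_contra hcon
    push_neg at hcon
    apply hZ0
    ext w
    simp only [LinearMap.zero_apply]
    apply nondeg
    intro u
    rw [Gsymm]
    exact hcon w u
  have hab : G (Z₀ a) ((G (Z₀ a) b0)⁻¹ • b0) = 1 := by
    rw [map_smul, smul_eq_mul, inv_mul_cancel₀ hab0]
  set b : W := (G (Z₀ a) b0)⁻¹ • b0 with hbdef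
  have hba : G (Z₀ b) a = -1 := by rw [hω b a, hab]
  -- key: if ω(w,a) = ω(w,b) = 0 then Z₀ w = 0
  have key : ∀ w : W, G (Z₀ w) a = 0 → G (Z₀ w) b = 0 → Z₀ w = 0 := by
    intro w hwa hwb
    by_contra hz
    set ip : Fin (p+2) := ⟨p, by omega⟩ with hip
    set iq : Fin (p+2) := ⟨p+1, by omega⟩ with hiq
    set x : W := Z₀ a
    set y : W := Z₀ b
    set z : W := Z₀ w
    set M : Matrix (Fin 2) (Fin 3) ℝ :=
      Matrix.of ![![e x ip, e y ip, e z ip], ![e x iq, e y iq, e z iq]] with hM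
    have hker : LinearMap.ker (Matrix.toLin' M) ≠ ⊥ := by
      apply LinearMap.ker_ne_bot_of_finrank_lt
      simp [Module.finrank_fin_fun]
    rw [Submodule.ne_bot_iff] at hker
    obtain ⟨c, hc, hc0⟩ := hker
    rw [LinearMap.mem_ker, Matrix.toLin'_apply] at hc
    set v : W := c 0 • x + c 1 • y + c 2 • z with hv
    have hvp : e v ip = 0 := by
      have h := congrFun hc 0
      simp [Matrix.mulVec, dotProduct, Fin.sum_univ_three, hM] at h
      simp only [hv, map_add, map_smul, Pi.add_apply, Pi.smul_apply, smul_eq_mul]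
      linarith
    have hvq : e v iq = 0 := by
      have h := congrFun hc 1
      simp [Matrix.mulVec, dotProduct, Fin.sum_univ_three, hM] at h
      simp only [hv, map_add, map_smul, Pi.add_apply, Pi.smul_apply, smul_eq_mul]
      linarith
    have hGvv : G v v = 0 := by
      simp only [hv, map_add, map_smul, LinearMap.add_apply, LinearMap.smul_apply,
        smul_eq_mul]
      simp only [x, y, z, him]
      ring
    have hcast : ∀ i : Fin p, e v (Fin.castAdd 2 i) = 0 := by
      have h := (hG v v).symm.trans hGvv
      rw [hvp, hvq] at h
      have hsum : (∑ i : Fin p, e v (Fin.castAdd 2 i) * e v (Fin.castAdd 2 i)) = 0 := by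
        linarith
      intro i
      have := (Finset.sum_eq_zero_iff_of_nonneg
        (fun i _ => mul_self_nonneg (e v (Fin.castAdd 2 i)))).mp hsum i (Finset.mem_univ i)
      exact mul_self_eq_zero.mp this
    have hv0 : v = 0 := by
      have hcoord : ∀ j : Fin (p+2), e v j = 0 := by
        intro j
        rcases lt_or_ge j.val p with hj | hj
        · have : j = Fin.castAdd 2 ⟨j.val, hj⟩ := by ext; rfl
          rw [this]; exact hcast _
        · have := j.isLt
          rcases Nat.lt_or_ge j.val (p+1) with h' | h'
          · have : j = ip := by rw [hip]; ext; simp; omega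
            rw [this]; exact hvp
          · have : j = iq := by rw [hiq]; ext; simp; omega
            rw [this]; exact hvq
      have : e v = 0 := funext hcoord
      simpa using congrArg e.symm this
    have hGvb : G v b = c 0 := by
      simp only [hv, map_add, map_smul, LinearMap.add_apply, LinearMap.smul_apply,
        smul_eq_mul]
      rw [show (G x b = 1) from hab, show (G y b = 0) from hωd b,
        show (G z b = 0) from hwb]
      ring
    have hGva : G v a = - c 1 := by
      simp only [hv, map_add, map_smul, LinearMap.add_apply, LinearMap.smul_apply,
        smul_eq_mul]
      rw [show (G x a = 0) from hωd a, show (G y a = -1) from hba,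
        show (G z a = 0) from hwa]
      ring
    have hc00 : c 0 = 0 := by rw [← hGvb, hv0]; simp
    have hc10 : c 1 = 0 := by
      have : G v a = 0 := by rw [hv0]; simp
      rw [hGva] at this; linarith
    have hc20 : c 2 ≠ 0 := by
      intro h
      apply hc0
      funext i
      fin_cases i <;> simpa [hc00, hc10, h]
    have : c 2 • z = 0 := by
      have := hv0
      rw [hv, hc00, hc10] at this
      simpa using this
    rcases smul_eq_zero.mp this with h | h
    · exact hc20 h
    · exact hz h
  -- conclude
  refine ⟨Z₀ a, Z₀ b, ?_, ?_, him a a, him b b, him a b, ?_⟩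
  · intro h
    rw [h] at hab
    simp at hab
  · intro h
    rw [h] at hba
    simp at hba
  · intro w
    set g1 : ℝ := G (Z₀ w) b with hg1
    set g2 : ℝ := G (Z₀ w) a with hg2
    have hzw' : Z₀ (w - g1 • a + g2 • b) = Z₀ w - g1 • Z₀ a + g2 • Z₀ b := by
      simp [map_add, map_sub, map_smul]
    have hA : G (Z₀ (w - g1 • a + g2 • b)) a = 0 := by
      rw [hzw']
      simp only [map_add, map_sub, map_smul, LinearMap.add_apply, LinearMap.sub_apply,
        LinearMap.smul_apply, smul_eq_mul]
      rw [show (G (Z₀ a) a = 0) from hωd a, hba, ← hg2]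
      ring
    have hB : G (Z₀ (w - g1 • a + g2 • b)) b = 0 := by
      rw [hzw']
      simp only [map_add, map_sub, map_smul, LinearMap.add_apply, LinearMap.sub_apply,
        LinearMap.smul_apply, smul_eq_mul]
      rw [hab, show (G (Z₀ b) b = 0) from hωd b, ← hg1]
      ring
    have h0 := key _ hA hB
    rw [hzw'] at h0
    have hPw : G (Z₀ a) w = - g2 := by rw [hω a w, ← hg2]
    have hQw : G (Z₀ b) w = - g1 := by rw [hω b w, ← hg1]
    rw [hPw, hQw]
    have : Z₀ w = g1 • Z₀ a - g2 • Z₀ b := by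
      have := h0
      abel_nf at this ⊢
      linear_combination (norm := module) this
    rw [this]
    module
end

section
/- On the manifold M̂ = {X ∈ ℝ^{d+2,2} : G(X,X) = 0, Z₀X ≠ 0}, consider the 1-form θ̂ given at X by θ̂(δX) = −G(X, Z₀δX) for tangent vectors δX, where Z₀ = P₀ ∧ Q₀ with P₀, Q₀ totally null. Then θ̂ ∧ dθ̂ = 0, i.e., the kernel distribution of θ̂ is integrable in the Frobenius sense. Concretely, with dθ̂(δX, δ′X) = −2 G(δX, Z₀ δ′X), the 3-form θ̂ ∧ dθ̂ vanishes identically. -/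
/-- on `M̂ = {X : G(X,X) = 0, Z₀X ≠ 0}`, with
`θ̂(u) = −G(X, Z₀u)` and `dθ̂(u,v) = −2G(u, Z₀v)` (`Z₀ = P₀ ∧ Q₀`, `P₀,Q₀`
totally null), the 3-form `θ̂ ∧ dθ̂` vanishes identically:
`θ̂(u)dθ̂(v,w) − θ̂(v)dθ̂(u,w) + θ̂(w)dθ̂(u,v) = 0` for all `u,v,w`. -/
theorem theta_wedge_dtheta_vanishes (d : ℕ)
    (G : (Fin (d+4) → ℝ) →ₗ[ℝ] (Fin (d+4) → ℝ) →ₗ[ℝ] ℝ)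
    (hsymm : ∀ u v, G u v = G v u)
    (hnondeg : ∀ u, (∀ v, G u v = 0) → u = 0)
    (P₀ Q₀ : Fin (d+4) → ℝ)
    (hspan : LinearIndependent ℝ ![P₀, Q₀])
    (hPP : G P₀ P₀ = 0) (hQQ : G Q₀ Q₀ = 0) (hPQ : G P₀ Q₀ = 0)
    (Z₀ : (Fin (d+4) → ℝ) → (Fin (d+4) → ℝ))
    (hZ₀ : ∀ w, Z₀ w = G P₀ w • Q₀ - G Q₀ w • P₀)
    (X : Fin (d+4) → ℝ) (hXnull : G X X = 0) (hXreg : Z₀ X ≠ 0) :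
    ∀ u v w : Fin (d+4) → ℝ,
      (-G X (Z₀ u)) * (-2 * G v (Z₀ w))
        - (-G X (Z₀ v)) * (-2 * G u (Z₀ w))
        + (-G X (Z₀ w)) * (-2 * G u (Z₀ v)) = 0 := by
  intro u v w
  simp only [hZ₀, map_sub, map_smul, smul_eq_mul, LinearMap.sub_apply,
    LinearMap.smul_apply]
  simp only [hsymm X P₀, hsymm X Q₀, hsymm u P₀, hsymm u Q₀, hsymm v P₀,
    hsymm v Q₀, hsymm w P₀, hsymm w Q₀]
  ring
end

section
/- Let θ be the 1-form on the null-cone region {X : G(X,X)=0, Z₀X ≠ 0} defined by θ_X(δX) = −G(X, Z₀δX)/F₀(X), where F₀(X) = G(X,P₀)² + G(X,Q₀)² and Z₀ = P₀∧Q₀ with P₀,Q₀ totally null. Then dθ = 0, i.e., θ is a closed 1-form. -/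
/-!
Writing `a = G(·, P₀)` and `b = G(·, Q₀)`, symmetry of `G` gives
`−G(Y, Z₀w) = a(Y) b(w) − b(Y) a(w)`, so `θ` is the pullback of the angle form
`(x dy − y dx)/(x² + y²)` of the punctured plane along the linear map `Y ↦ (a Y, b Y)`.
The angle form is closed, and so is its pullback, on the whole open set `F₀ ≠ 0`;
in particular on its intersection with the null cone.
-/

variable {E : Type*} [NormedAddCommGroup E] [NormedSpace ℝ E]

theorem fderiv_div_apply {f g : E → ℝ} {X : E} (hf : DifferentiableAt ℝ f X)
    (hg : DifferentiableAt ℝ g X) (hX : g X ≠ 0) (u : E) :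
    fderiv ℝ (fun Y => f Y / g Y) X u
      = (fderiv ℝ f X u * g X - f X * fderiv ℝ g X u) / g X ^ 2 := by
  have h := hf.hasFDerivAt.mul ((hasDerivAt_inv hX).comp_hasFDerivAt X hg.hasFDerivAt)
  simp only [div_eq_mul_inv]
  rw [show (fun Y => f Y * (g Y)⁻¹) = f * (Inv.inv ∘ g) from rfl, h.fderiv]
  simp only [neg_smul, smul_neg, Function.comp_apply, add_apply,
    neg_apply, smul_apply, smul_eq_mul]
  field_simp
  ring

theorem fderiv_sq_add_sq_apply (a b : E →L[ℝ] ℝ) (X u : E) :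
    fderiv ℝ (fun Y => a Y ^ 2 + b Y ^ 2) X u = 2 * (a X * a u + b X * b u) := by
  have h := ((a.hasFDerivAt (x := X)).pow 2).fun_add ((b.hasFDerivAt (x := X)).pow 2)
  rw [h.fderiv]
  simp only [Nat.add_one_sub_one, pow_one, nsmul_eq_mul, Nat.cast_ofNat,
    add_apply, smul_apply, smul_eq_mul]
  ring

/-- `angleForm a b w Y` is the pullback of `(x dy − y dx)/(x² + y²)` along
`Y ↦ (a Y, b Y)`, taken at the point `Y` on the tangent vector `w`. -/
noncomputable def angleForm (a b : E →L[ℝ] ℝ) (w Y : E) : ℝ :=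
  (a Y * b w - b Y * a w) / (a Y ^ 2 + b Y ^ 2)

theorem fderiv_angleForm_apply (a b : E →L[ℝ] ℝ) {X : E} (hX : a X ^ 2 + b X ^ 2 ≠ 0)
    (w u : E) :
    fderiv ℝ (angleForm a b w) X u
      = ((a u * b w - b u * a w) * (a X ^ 2 + b X ^ 2)
          - (a X * b w - b X * a w) * (2 * (a X * a u + b X * b u)))
        / (a X ^ 2 + b X ^ 2) ^ 2 := by
  have hnum : HasFDerivAt (fun Y => a Y * b w - b Y * a w) (b w • a - a w • b) X := by
    convert (b w • a - a w • b).hasFDerivAt using 1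
    ext Y
    simp [mul_comm]
  unfold angleForm
  rw [fderiv_div_apply hnum.differentiableAt (by fun_prop) hX, hnum.fderiv,
    fderiv_sq_add_sq_apply]
  simp [mul_comm]

theorem angleForm_closed (a b : E →L[ℝ] ℝ) {X : E} (hX : a X ^ 2 + b X ^ 2 ≠ 0) (u v : E) :
    fderiv ℝ (angleForm a b v) X u - fderiv ℝ (angleForm a b u) X v = 0 := by
  rw [fderiv_angleForm_apply a b hX, fderiv_angleForm_apply a b hX, ← sub_div,
    div_eq_zero_iff]
  left
  ring

theorem theta_closed_general (d : ℕ)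
    (G : (Fin (d+4) → ℝ) →ₗ[ℝ] (Fin (d+4) → ℝ) →ₗ[ℝ] ℝ)
    (hsymm : ∀ u v, G u v = G v u)
    (P₀ Q₀ : Fin (d+4) → ℝ)
    (Z₀ : (Fin (d+4) → ℝ) → (Fin (d+4) → ℝ))
    (hZ₀ : ∀ w, Z₀ w = G P₀ w • Q₀ - G Q₀ w • P₀)
    (X : Fin (d+4) → ℝ) (hXreg : Z₀ X ≠ 0) :
    ∀ u v : Fin (d+4) → ℝ,
      fderiv ℝ (fun Y => -G Y (Z₀ v) / ((G Y P₀) ^ 2 + (G Y Q₀) ^ 2)) X u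
        - fderiv ℝ (fun Y => -G Y (Z₀ u) / ((G Y P₀) ^ 2 + (G Y Q₀) ^ 2)) X v
        = 0 := by
  intro u v
  set a := LinearMap.toContinuousLinearMap (G.flip P₀)
  set b := LinearMap.toContinuousLinearMap (G.flip Q₀)
  have hθ : ∀ w, (fun Y => -G Y (Z₀ w) / ((G Y P₀) ^ 2 + (G Y Q₀) ^ 2)) = angleForm a b w := by
    intro w
    ext Y
    simp only [angleForm, a, b, LinearMap.coe_toContinuousLinearMap', LinearMap.flip_apply,
      hZ₀, map_sub, map_smul, smul_eq_mul, hsymm P₀ w, hsymm Q₀ w]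
    ring
  have hF : a X ^ 2 + b X ^ 2 ≠ 0 := by
    contrapose! hXreg
    obtain ⟨haX, hbX⟩ := (add_eq_zero_iff_of_nonneg (sq_nonneg _) (sq_nonneg _)).mp hXreg
    simp only [a, b, LinearMap.coe_toContinuousLinearMap', LinearMap.flip_apply,
      sq_eq_zero_iff] at haX hbX
    simp [hZ₀, hsymm P₀ X, hsymm Q₀ X, haX, hbX]
  rw [hθ, hθ]
  exact angleForm_closed a b hF u v

/-- the 1-form `θ_X(δX) = −G(X, Z₀δX)/F₀(X)`, with
`F₀(X) = G(X,P₀)² + G(X,Q₀)²` and `Z₀ = P₀ ∧ Q₀` (`P₀,Q₀` totally null), is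
closed on the region `{G(X,X) = 0, Z₀X ≠ 0}` of the null cone: for constant
directions `u, v`, `dθ(u,v) = ∂_u θ(·,v) − ∂_v θ(·,u) = 0`. -/
theorem theta_closed (d : ℕ)
    (G : (Fin (d+4) → ℝ) →ₗ[ℝ] (Fin (d+4) → ℝ) →ₗ[ℝ] ℝ)
    (hsymm : ∀ u v, G u v = G v u)
    (hnondeg : ∀ u, (∀ v, G u v = 0) → u = 0)
    (P₀ Q₀ : Fin (d+4) → ℝ)
    (hspan : LinearIndependent ℝ ![P₀, Q₀])
    (hPP : G P₀ P₀ = 0) (hQQ : G Q₀ Q₀ = 0) (hPQ : G P₀ Q₀ = 0)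
    (Z₀ : (Fin (d+4) → ℝ) → (Fin (d+4) → ℝ))
    (hZ₀ : ∀ w, Z₀ w = G P₀ w • Q₀ - G Q₀ w • P₀)
    (X : Fin (d+4) → ℝ) (hXnull : G X X = 0) (hXreg : Z₀ X ≠ 0) :
    ∀ u v : Fin (d+4) → ℝ,
      fderiv ℝ (fun Y => -G Y (Z₀ v) / ((G Y P₀) ^ 2 + (G Y Q₀) ^ 2)) X u
        - fderiv ℝ (fun Y => -G Y (Z₀ u) / ((G Y P₀) ^ 2 + (G Y Q₀) ^ 2)) X v
        = 0 :=
  theta_closed_general d G hsymm P₀ Q₀ Z₀ hZ₀ X hXreg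
end
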